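/- arXiv:0712.1205 — 2 statements merged into one kernel-verified Lean document; each statement's English description precedes it below -/
import Mathlib

section
/- Role monotonicity of evaluation: if the small-step evaluation judgment under context role B reduces term M to M' (written B ⊢ M → M'), and role A dominates B, then also A ⊢ M → M'. (The context role is only consulted in the rule r-chk, which requires the context role to dominate the guard role.) -/
namespace LRBAC

/-- Role domination: `dom A B` means `A = A ⊔ B`. -/
def dom {R : Type*} [BooleanAlgebra R] (A B : R) : Prop := A = A ⊔ B

/-- Role modifiers: amplification `up A` and restriction `dn A`. -/
inductive Mod (R : Type*) where
  | up (A : R)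
  | dn (A : R)

/-- Applying a role modifier to a context role. -/
def Mod.app {R : Type*} [BooleanAlgebra R] : Mod R → R → R
  | .up A, C => A ⊔ C
  | .dn A, C => A ⊓ C

/-- Terms of λ-RBAC (de Bruijn representation). -/
inductive Tm (R : Type*) where
  | base (n : ℕ)
  | var (n : ℕ)
  | abs (M : Tm R)
  | app (M N : Tm R)
  | fix (M : Tm R)
  | grd (A : R) (M : Tm R)
  | chk (M : Tm R)
  | unit (M : Tm R)
  | bind (M N : Tm R)
  | mod (m : Mod R) (M : Tm R)

/-- de Bruijn shifting. -/
def Tm.shift {R : Type*} (d : ℕ) : ℕ → Tm R → Tm R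
  | _, .base n => .base n
  | c, .var n => .var (if n < c then n else n + d)
  | c, .abs M => .abs (Tm.shift d (c+1) M)
  | c, .app M N => .app (Tm.shift d c M) (Tm.shift d c N)
  | c, .fix M => .fix (Tm.shift d c M)
  | c, .grd A M => .grd A (Tm.shift d c M)
  | c, .chk M => .chk (Tm.shift d c M)
  | c, .unit M => .unit (Tm.shift d c M)
  | c, .bind M N => .bind (Tm.shift d c M) (Tm.shift d (c+1) N)
  | c, .mod m M => .mod m (Tm.shift d c M)

/-- Capture-avoiding substitution: `Tm.subst k N M = M[k := N]`. -/
def Tm.subst {R : Type*} : ℕ → Tm R → Tm R → Tm R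
  | _, _, .base n => .base n
  | k, N, .var n => if n = k then N else if k < n then .var (n-1) else .var n
  | k, N, .abs M => .abs (Tm.subst (k+1) (Tm.shift 1 0 N) M)
  | k, N, .app M M' => .app (Tm.subst k N M) (Tm.subst k N M')
  | k, N, .fix M => .fix (Tm.subst k N M)
  | k, N, .grd A M => .grd A (Tm.subst k N M)
  | k, N, .chk M => .chk (Tm.subst k N M)
  | k, N, .unit M => .unit (Tm.subst k N M)
  | k, N, .bind M M' => .bind (Tm.subst k N M) (Tm.subst (k+1) (Tm.shift 1 0 N) M')
  | k, N, .mod m M => .mod m (Tm.subst k N M)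

/-- Values. -/
inductive Tm.IsValue {R : Type*} : Tm R → Prop
  | base (n : ℕ) : Tm.IsValue (.base n)
  | var (n : ℕ) : Tm.IsValue (.var n)
  | abs (M : Tm R) : Tm.IsValue (.abs M)
  | grd (A : R) (M : Tm R) : Tm.IsValue (.grd A M)
  | unit (M : Tm R) : Tm.IsValue (.unit M)

variable {R : Type*} [BooleanAlgebra R]

/-- Role-indexed small-step evaluation `A ⊢ M → M'`. -/
inductive Eval : R → Tm R → Tm R → Prop
  | rApp {A : R} {M N : Tm R} : Eval A (.app (.abs M) N) (Tm.subst 0 N M)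
  | cApp {A : R} {M M' N : Tm R} : Eval A M M' → Eval A (.app M N) (.app M' N)
  | rFix {A : R} {M : Tm R} :
      Eval A (.fix (.abs M)) (Tm.subst 0 (.fix (.abs M)) M)
  | cFix {A : R} {M M' : Tm R} : Eval A M M' → Eval A (.fix M) (.fix M')
  | rChk {A B : R} {M : Tm R} : dom A B → Eval A (.chk (.grd B M)) (.unit M)
  | cChk {A : R} {M M' : Tm R} : Eval A M M' → Eval A (.chk M) (.chk M')
  | rBind {A : R} {M N : Tm R} : Eval A (.bind (.unit M) N) (Tm.subst 0 M N)
  | cBind {A : R} {M M' N : Tm R} : Eval A M M' → Eval A (.bind M N) (.bind M' N)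
  | rMod {A : R} {m : Mod R} {V : Tm R} : V.IsValue → Eval A (.mod m V) V
  | cMod {A : R} {m : Mod R} {M M' : Tm R} :
      Eval (m.app A) M M' → Eval A (.mod m M) (.mod m M')

/-- Role errors `M ⇑ᴬ err`. -/
inductive Err : R → Tm R → Prop
  | chk {A B : R} {M : Tm R} : ¬ dom A B → Err A (.chk (.grd B M))
  | ctxApp {A : R} {M N : Tm R} : Err A M → Err A (.app M N)
  | ctxFix {A : R} {M : Tm R} : Err A M → Err A (.fix M)
  | ctxBind {A : R} {M N : Tm R} : Err A M → Err A (.bind M N)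
  | ctxChk {A : R} {M : Tm R} : Err A M → Err A (.chk M)
  | ctxMod {A : R} {m : Mod R} {M : Tm R} : Err (m.app A) M → Err A (.mod m M)

/-- Multi-step evaluation. -/
def Evals (A : R) : Tm R → Tm R → Prop := Relation.ReflTransGen (Eval A)

/-- Divergence under context role `A`. -/
def Diverges (A : R) (M : Tm R) : Prop :=
  ∃ f : ℕ → Tm R, f 0 = M ∧ ∀ n, Eval A (f n) (f (n+1))

/-- Types: base, arrow, guard `A⊳T`, computation `A○T`. -/
inductive Ty (R : Type*) where
  | base
  | arrow (S T : Ty R)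
  | grd (A : R) (T : Ty R)
  | comp (A : R) (T : Ty R)

/-- Subtyping, indexed by the system: `true` is the first ("sufficient")
system, `false` the second ("necessary") one. -/
inductive Sub : Bool → Ty R → Ty R → Prop
  | base {s} : Sub s .base .base
  | arrow {s} {S S' T T' : Ty R} :
      Sub s S' S → Sub s T T' → Sub s (.arrow S T) (.arrow S' T')
  | grd {s} {A A' : R} {T T' : Ty R} :
      (s = true → dom A' A) → (s = false → dom A A') → Sub s T T' →
      Sub s (.grd A T) (.grd A' T')
  | comp {s} {A A' : R} {T T' : Ty R} :
      (s = true → dom A' A) → (s = false → dom A A') → Sub s T T' →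
      Sub s (.comp A T) (.comp A' T')

/-- Typing judgment of the two λ-RBAC type systems. -/
inductive Typing : Bool → List (Ty R) → Tm R → Ty R → Prop
  | base {s Γ n} : Typing s Γ (.base n) .base
  | var {s Γ n T} : Γ[n]? = some T → Typing s Γ (.var n) T
  | sub {s Γ M T T'} : Typing s Γ M T → Sub s T T' → Typing s Γ M T'
  | abs {s Γ M S T} : Typing s (S :: Γ) M T → Typing s Γ (.abs M) (.arrow S T)
  | app {s Γ M N S T} :
      Typing s Γ M (.arrow S T) → Typing s Γ N S → Typing s Γ (.app M N) T
  | fix {s Γ M T} : Typing s Γ M (.arrow T T) → Typing s Γ (.fix M) T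
  | grd {s Γ M A T} : Typing s Γ M T → Typing s Γ (.grd A M) (.grd A T)
  | chk {s Γ M A T} : Typing s Γ M (.grd A T) → Typing s Γ (.chk M) (.comp A T)
  | unit {s Γ M T} : Typing s Γ M T → Typing s Γ (.unit M) (.comp ⊥ T)
  | bind {s Γ M N A B T S} :
      Typing s Γ M (.comp A T) → Typing s (T :: Γ) N (.comp B S) →
      Typing s Γ (.bind M N) (.comp (A ⊔ B) S)
  | modUp {s Γ M A B T} :
      Typing s Γ M (.comp B T) →
      Typing s Γ (.mod (.up A) M) (.comp (B ⊓ Aᶜ) T)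
  | modDn {s Γ M A B T} :
      Typing s Γ M (.comp B T) → (s = true → dom A B) →
      Typing s Γ (.mod (.dn A) M) (.comp B T)

/-- Type compatibility. -/
def Compat (T S : Ty R) : Prop :=
  T = S ∨ ∃ (A B : R) (U : Ty R), T = .comp A U ∧ S = .comp B U

/-- A role dominates a type. -/
def DomTy (A : R) : Ty R → Prop
  | .comp B _ => dom A B
  | _ => True

lemma dom_iff {R : Type*} [BooleanAlgebra R] {A B : R} : dom A B ↔ B ≤ A := by
  rw [dom, eq_comm, sup_eq_left]

lemma dom_trans {R : Type*} [BooleanAlgebra R] {A B C : R}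
    (h1 : dom A B) (h2 : dom B C) : dom A C := by
  rw [dom_iff] at *; exact h2.trans h1

lemma dom_mod {R : Type*} [BooleanAlgebra R] {A B : R} (m : Mod R)
    (h : dom A B) : dom (m.app A) (m.app B) := by
  rw [dom_iff] at *
  cases m with
  | up C => exact sup_le_sup_left h C
  | dn C => exact inf_le_inf_left C h

end LRBAC

open LRBAC

/-- Role monotonicity of evaluation. -/
theorem stmt_9 (R : Type*) [BooleanAlgebra R] (A B : R) (M M' : Tm R)
    (h : Eval B M M') (hAB : dom A B) : Eval A M M' := by
  induction h generalizing A with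
  | rApp => exact Eval.rApp
  | cApp _ ih => exact Eval.cApp (ih _ hAB)
  | rFix => exact Eval.rFix
  | cFix _ ih => exact Eval.cFix (ih _ hAB)
  | rChk hd => exact Eval.rChk (dom_trans hAB hd)
  | cChk _ ih => exact Eval.cChk (ih _ hAB)
  | rBind => exact Eval.rBind
  | cBind _ ih => exact Eval.cBind (ih _ hAB)
  | rMod hv => exact Eval.rMod hv
  | cMod _ ih => exact Eval.cMod (ih _ (dom_mod _ hAB))
end

section
/- Progress for the second (necessary) type system: for every role A, if ⊢₂ M : T then either M is a value, or M produces a role error under A (M ⇑ᴬ err), or there exists N with A ⊢ M → N. -/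
open LRBAC

namespace LRBAC

variable {R : Type*} [BooleanAlgebra R]

lemma canon {s : Bool} {Γ : List (Ty R)} {V : Tm R} {T : Ty R} (h : Typing s Γ V T)
    (hΓ : Γ = []) (hv : V.IsValue) :
    (∃ n, V = .base n ∧ T = Ty.base) ∨
    (∃ M S U, V = .abs M ∧ T = Ty.arrow S U) ∨
    (∃ B M B' U, V = .grd B M ∧ T = Ty.grd B' U) ∨
    (∃ M B' U, V = .unit M ∧ T = Ty.comp B' U) := by
  induction h with
  | base => exact Or.inl ⟨_, rfl, rfl⟩
  | var h => subst hΓ; simp at h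
  | sub h hsub ih =>
    rcases ih hΓ hv with ⟨n, hV, hT⟩ | ⟨M, S, U, hV, hT⟩ | ⟨B, M, B', U, hV, hT⟩ |
        ⟨M, B', U, hV, hT⟩ <;> subst hT <;> cases hsub
    · exact Or.inl ⟨_, hV, rfl⟩
    · exact Or.inr (Or.inl ⟨_, _, _, hV, rfl⟩)
    · exact Or.inr (Or.inr (Or.inl ⟨_, _, _, _, hV, rfl⟩))
    · exact Or.inr (Or.inr (Or.inr ⟨_, _, _, hV, rfl⟩))
  | abs _ => exact Or.inr (Or.inl ⟨_, _, _, rfl, rfl⟩)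
  | grd _ => exact Or.inr (Or.inr (Or.inl ⟨_, _, _, _, rfl, rfl⟩))
  | unit _ => exact Or.inr (Or.inr (Or.inr ⟨_, _, _, rfl, rfl⟩))
  | app _ _ => cases hv
  | fix _ => cases hv
  | chk _ => cases hv
  | bind _ _ => cases hv
  | modUp _ => cases hv
  | modDn _ _ => cases hv

lemma progress_aux {s : Bool} {Γ : List (Ty R)} {M : Tm R} {T : Ty R} (hT : Typing s Γ M T)
    (hΓ : Γ = []) :
    ∀ A : R, M.IsValue ∨ Err A M ∨ ∃ N, Eval A M N := by
  induction hT with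
  | base => exact fun _ => Or.inl (.base _)
  | var h => subst hΓ; simp at h
  | sub _ _ ih => exact ih hΓ
  | abs _ => exact fun _ => Or.inl (.abs _)
  | app hM _ ihM _ =>
    intro A
    rcases ihM hΓ A with hv | he | ⟨M', hstep⟩
    · rcases canon hM hΓ hv with ⟨n, hV, hTy⟩ | ⟨M₀, S, U, hV, _⟩ |
          ⟨B, M₀, B', U, hV, hTy⟩ | ⟨M₀, B', U, hV, hTy⟩ <;> try (subst hV; cases hTy)
      subst hV; exact Or.inr (Or.inr ⟨_, .rApp⟩)
    · exact Or.inr (Or.inl (.ctxApp he))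
    · exact Or.inr (Or.inr ⟨_, .cApp hstep⟩)
  | fix hM ihM =>
    intro A
    rcases ihM hΓ A with hv | he | ⟨M', hstep⟩
    · rcases canon hM hΓ hv with ⟨n, hV, hTy⟩ | ⟨M₀, S, U, hV, _⟩ |
          ⟨B, M₀, B', U, hV, hTy⟩ | ⟨M₀, B', U, hV, hTy⟩ <;> try (subst hV; cases hTy)
      subst hV; exact Or.inr (Or.inr ⟨_, .rFix⟩)
    · exact Or.inr (Or.inl (.ctxFix he))
    · exact Or.inr (Or.inr ⟨_, .cFix hstep⟩)
  | grd _ => exact fun _ => Or.inl (.grd _ _)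
  | chk hM ihM =>
    intro A
    rcases ihM hΓ A with hv | he | ⟨M', hstep⟩
    · rcases canon hM hΓ hv with ⟨n, hV, hTy⟩ | ⟨M₀, S, U, hV, hTy⟩ |
          ⟨B, M₀, B', U, hV, _⟩ | ⟨M₀, B', U, hV, hTy⟩ <;> try (subst hV; cases hTy)
      subst hV
      by_cases hd : dom A B
      · exact Or.inr (Or.inr ⟨_, .rChk hd⟩)
      · exact Or.inr (Or.inl (.chk hd))
    · exact Or.inr (Or.inl (.ctxChk he))
    · exact Or.inr (Or.inr ⟨_, .cChk hstep⟩)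
  | unit _ => exact fun _ => Or.inl (.unit _)
  | bind hM _ ihM _ =>
    intro A
    rcases ihM hΓ A with hv | he | ⟨M', hstep⟩
    · rcases canon hM hΓ hv with ⟨n, hV, hTy⟩ | ⟨M₀, S, U, hV, hTy⟩ |
          ⟨B, M₀, B', U, hV, hTy⟩ | ⟨M₀, B', U, hV, _⟩ <;> try (subst hV; cases hTy)
      subst hV; exact Or.inr (Or.inr ⟨_, .rBind⟩)
    · exact Or.inr (Or.inl (.ctxBind he))
    · exact Or.inr (Or.inr ⟨_, .cBind hstep⟩)
  | modUp _ ihM =>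
    intro A
    rcases ihM hΓ ((Mod.up _).app A) with hv | he | ⟨M', hstep⟩
    · exact Or.inr (Or.inr ⟨_, .rMod hv⟩)
    · exact Or.inr (Or.inl (.ctxMod he))
    · exact Or.inr (Or.inr ⟨_, .cMod hstep⟩)
  | modDn _ _ ihM =>
    intro A
    rcases ihM hΓ ((Mod.dn _).app A) with hv | he | ⟨M', hstep⟩
    · exact Or.inr (Or.inr ⟨_, .rMod hv⟩)
    · exact Or.inr (Or.inl (.ctxMod he))
    · exact Or.inr (Or.inr ⟨_, .cMod hstep⟩)

end LRBAC

/-- Progress for the second (necessary) type system. -/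
theorem stmt_16 (R : Type*) [BooleanAlgebra R] (A : R) (M : Tm R) (T : Ty R)
    (hT : Typing false [] M T) :
    M.IsValue ∨ Err A M ∨ ∃ N, Eval A M N :=
  progress_aux hT rfl A
end
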